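/- For every ideal I on a countable set X, the additivity of the I-Miller null ideal equals the additivity of K_I and both equal min{𝔟, add*_ω(I)}: add(M_I) = add(K_I) = min{𝔟, add*_ω(I)}. -/

import Mathlib

open Cardinal Filter Set
open scoped ENNReal

noncomputable section

/-- An ideal on a (countable) set `X`, in the sense of the paper: a proper family of
subsets of `X` closed under taking subsets and finite unions and containing all
finite subsets of `X`. -/
structure IsIdealOn {X : Type} (I : Set (Set X)) : Prop where
  subset_mem : ∀ ⦃A B : Set X⦄, A ⊆ B → B ∈ I → A ∈ I
  union_mem : ∀ ⦃A B : Set X⦄, A ∈ I → B ∈ I → A ∪ B ∈ I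
  finite_mem : ∀ ⦃A : Set X⦄, A.Finite → A ∈ I
  proper : (univ : Set X) ∉ I

/-- The finite initial segment `x ↾ n` of `x : X^ω`, as a list (an element of `X^{<ω}`). -/
def seg {X : Type} (x : ℕ → X) (n : ℕ) : List X := (List.range n).map x

/-- The `I`-Miller null ideal `M_I`: the σ-ideal on `X^ω` generated by the sets
`M_φ = {x | ∀^∞ n, x n ∈ φ (x ↾ n)}`, where `φ : X^{<ω} → I`.  (A set is in the
generated σ-ideal iff it is covered by countably many generators.) -/
def MIdeal {X : Type} (I : Set (Set X)) : Set (Set (ℕ → X)) :=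
  {A | ∃ φ : ℕ → List X → Set X, (∀ n s, φ n s ∈ I) ∧
    A ⊆ ⋃ n, {x : ℕ → X | ∀ᶠ m in atTop, x m ∈ φ n (seg x m)}}

/-- The σ-ideal `K_I` on `X^ω` generated by the sets
`K_φ = {x | ∀^∞ n, x n ∈ φ n}`, where `φ : ω → I`. -/
def KIdeal {X : Type} (I : Set (Set X)) : Set (Set (ℕ → X)) :=
  {A | ∃ φ : ℕ → ℕ → Set X, (∀ n m, φ n m ∈ I) ∧
    A ⊆ ⋃ n, {x : ℕ → X | ∀ᶠ m in atTop, x m ∈ φ n m}}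

/-- Additivity `add(J)` of a (σ-)ideal `J`: the least cardinality of a subfamily of `J`
whose union is not in `J`. -/
def addIdeal {Y : Type} (J : Set (Set Y)) : Cardinal :=
  sInf {c | ∃ 𝒜 : Set (Set Y), 𝒜 ⊆ J ∧ ⋃₀ 𝒜 ∉ J ∧ Cardinal.mk 𝒜 = c}

/-- Covering number `cov(J)`: the least cardinality of a subfamily of `J` covering `Y`. -/
def covIdeal {Y : Type} (J : Set (Set Y)) : Cardinal :=
  sInf {c | ∃ 𝒜 : Set (Set Y), 𝒜 ⊆ J ∧ ⋃₀ 𝒜 = Set.univ ∧ Cardinal.mk 𝒜 = c}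

/-- Uniformity `non(J)`: the least cardinality of a subset of `Y` not in `J`. -/
def nonIdeal {Y : Type} (J : Set (Set Y)) : Cardinal :=
  sInf {c | ∃ S : Set Y, S ∉ J ∧ Cardinal.mk S = c}

/-- Cofinality `cof(J)`: the least cardinality of a cofinal (w.r.t. `⊆`) subfamily of `J`. -/
def cofIdeal {Y : Type} (J : Set (Set Y)) : Cardinal :=
  sInf {c | ∃ 𝒜 : Set (Set Y), 𝒜 ⊆ J ∧ (∀ B ∈ J, ∃ A ∈ 𝒜, B ⊆ A) ∧ Cardinal.mk 𝒜 = c}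

/-- `f ≤* g`: eventual domination on `ω^ω`. -/
def LeStar (f g : ℕ → ℕ) : Prop := ∀ᶠ n in atTop, f n ≤ g n

/-- The bounding number `𝔟`. -/
def bNum : Cardinal :=
  sInf {c | ∃ F : Set (ℕ → ℕ), (∀ g : ℕ → ℕ, ∃ f ∈ F, ¬ LeStar f g) ∧ Cardinal.mk F = c}

/-- The dominating number `𝔡`. -/
def dNum : Cardinal :=
  sInf {c | ∃ F : Set (ℕ → ℕ), (∀ f : ℕ → ℕ, ∃ g ∈ F, LeStar f g) ∧ Cardinal.mk F = c}

/-- `A ⊆* B`: almost inclusion (`A \ B` finite). -/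
def AlSub {X : Type} (A B : Set X) : Prop := (A \ B).Finite

/-- The set of cardinalities of witnessing families for `add*_ω(I)`: families `𝒜 ⊆ I`
such that for every countable `B̄ ⊆ I` some `A ∈ 𝒜` satisfies `A ⊄* B` for all `B ∈ B̄`.
`add*_ω(I)` is the minimum of this set (`∞` if it is empty). -/
def addStarOmegaFam {X : Type} (I : Set (Set X)) : Set Cardinal :=
  {c | ∃ 𝒜 : Set (Set X), 𝒜 ⊆ I ∧
    (∀ B : ℕ → Set X, (∀ n, B n ∈ I) → ∃ A ∈ 𝒜, ∀ n, ¬ AlSub A (B n)) ∧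
    Cardinal.mk 𝒜 = c}

/-- The set of cardinalities of witnessing families for `cof*_ω(I)`: families `𝒜` of
countable subsets of `I` such that for every countable `B̄ ⊆ I` there is `Ā ∈ 𝒜` with:
every `B ∈ B̄` satisfies `B ⊆* A` for some `A ∈ Ā`.  `cof*_ω(I)` is the minimum. -/
def cofStarOmegaFam {X : Type} (I : Set (Set X)) : Set Cardinal :=
  {c | ∃ 𝒜 : Set (Set (Set X)), (∀ As ∈ 𝒜, As.Countable ∧ As ⊆ I) ∧
    (∀ B : ℕ → Set X, (∀ n, B n ∈ I) → ∃ As ∈ 𝒜, ∀ n, ∃ A ∈ As, AlSub (B n) A) ∧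
    Cardinal.mk 𝒜 = c}

/-- The set of cardinalities of witnessing families for `non*_ω(I)`: families `𝒜` of
infinite subsets of `X` such that for every countable `B̄ ⊆ I` there is `A ∈ 𝒜` with
`A ∩ B` finite for all `B ∈ B̄`.  `non*_ω(I)` is the minimum of this set. -/
def nonStarOmegaFam {X : Type} (I : Set (Set X)) : Set Cardinal :=
  {c | ∃ 𝒜 : Set (Set X), (∀ A ∈ 𝒜, A.Infinite) ∧
    (∀ B : ℕ → Set X, (∀ n, B n ∈ I) → ∃ A ∈ 𝒜, ∀ n, (A ∩ B n).Finite) ∧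
    Cardinal.mk 𝒜 = c}

/-- The set of cardinalities of witnessing families for `cov*(I)`: families `𝒜 ⊆ I` such
that every infinite `B ⊆ X` has infinite intersection with some member of `𝒜`.
`cov*(I)` is the minimum of this set (`∞` if it is empty, i.e. if `I` is not tall). -/
def covStarFam {X : Type} (I : Set (Set X)) : Set Cardinal :=
  {c | ∃ 𝒜 : Set (Set X), 𝒜 ⊆ I ∧
    (∀ B : Set X, B.Infinite → ∃ A ∈ 𝒜, (A ∩ B).Infinite) ∧ Cardinal.mk 𝒜 = c}

/-- The set of cardinalities of witnessing families for `non*(I)`: families `𝒜` of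
infinite subsets of `X` such that every `B ∈ I` has finite intersection with some
member of `𝒜`.  `non*(I)` is the minimum of this set. -/
def nonStarFam {X : Type} (I : Set (Set X)) : Set Cardinal :=
  {c | ∃ 𝒜 : Set (Set X), (∀ A ∈ 𝒜, A.Infinite) ∧
    (∀ B ∈ I, ∃ A ∈ 𝒜, (A ∩ B).Finite) ∧ Cardinal.mk 𝒜 = c}

/-- The meager ideal of the product space `X^ω`, where `X` carries the discrete
topology (for countable `X` this is a Polish space). -/
def meagerIdeal (X : Type) : Set (Set (ℕ → X)) :=
  letI : TopologicalSpace X := ⊥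
  {A : Set (ℕ → X) | IsMeagre A}

/-- The Fubini product `I ⊗ J` of two ideals. -/
def Fubini {X Y : Type} (I : Set (Set X)) (J : Set (Set Y)) : Set (Set (X × Y)) :=
  {A | {x : X | {y : Y | (x, y) ∈ A} ∉ J} ∈ I}

/-- The ideal `Fin` of finite subsets of `X`. -/
def finIdeal (X : Type) : Set (Set X) := {A : Set X | A.Finite}

/-- The nowhere dense ideal on `2^{<ω}`: `A` belongs to it iff for every `s` there is an
extension `t ⊇ s` none of whose extensions belongs to `A`. -/
def nwdIdeal : Set (Set (List Bool)) :=
  {A | ∀ s : List Bool, ∃ t : List Bool, s <+: t ∧ ∀ u : List Bool, t <+: u → u ∉ A}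

/-- A submeasure: monotone, finitely subadditive, vanishing on `∅`. -/
def IsSubmeasure (φ : Set ℕ → ℝ≥0∞) : Prop :=
  φ ∅ = 0 ∧ (∀ A B : Set ℕ, A ⊆ B → φ A ≤ φ B) ∧ ∀ A B : Set ℕ, φ (A ∪ B) ≤ φ A + φ B

/-- `I` is gradually fragmented: there are a partition `⟨P n⟩` of `ω` into nonempty finite
sets and submeasures `φ n` with `A ∈ I ↔ sup_n φ n (A ∩ P n) < ∞`, together with
`f : ω → ω` such that for all `n, i`, for all but finitely many `j`: any family of at
most `i` subsets of `P j`, each of `φ j`-value `≤ n`, has union of `φ j`-value `≤ f n`. -/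
def GraduallyFragmented (I : Set (Set ℕ)) : Prop :=
  ∃ (P : ℕ → Set ℕ) (φ : ℕ → Set ℕ → ℝ≥0∞) (f : ℕ → ℕ),
    (∀ n, (P n).Finite) ∧ (∀ n, (P n).Nonempty) ∧
    (∀ n m, n ≠ m → Disjoint (P n) (P m)) ∧ (⋃ n, P n) = Set.univ ∧
    (∀ n, IsSubmeasure (φ n)) ∧
    (∀ A : Set ℕ, A ∈ I ↔ (⨆ n, φ n (A ∩ P n)) < ⊤) ∧
    (∀ n i : ℕ, ∀ᶠ j in atTop, ∀ ℬ : Finset (Set ℕ), ℬ.card ≤ i →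
      (∀ B ∈ ℬ, B ⊆ P j) → (∀ B ∈ ℬ, φ j B ≤ (n : ℝ≥0∞)) →
      φ j (⋃ B ∈ ℬ, B) ≤ ((f n : ℕ) : ℝ≥0∞))

/-- The basic clopen cylinder of `2^ω` determined by a finite binary string. -/
def cylSet (s : List Bool) : Set (ℕ → Bool) :=
  {x | ∀ i : Fin s.length, x i.val = s.get i}

/-- `A ⊆ 2^ω` is null for the uniform (coin-flipping) product measure: for every `ε > 0`
it is covered by countably many cylinders of total weight `≤ ε` (the cylinder of a
string `s` has weight `2^{-|s|}`). -/
def IsNullCantor (A : Set (ℕ → Bool)) : Prop :=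
  ∀ ε : ℝ≥0∞, 0 < ε → ∃ s : ℕ → List Bool,
    A ⊆ (⋃ n, cylSet (s n)) ∧ (∑' n : ℕ, (2⁻¹ : ℝ≥0∞) ^ (s n).length) ≤ ε

/-- Coordinatewise addition modulo 2 on `2^ω`. -/
def xorAdd (x y : ℕ → Bool) : ℕ → Bool := fun n => xor (x n) (y n)

/-- The transitive additivity `add_t(𝒩)` of the null ideal of `2^ω`:
`min {|A| : A ⊆ 2^ω ∧ ∃ X ∈ 𝒩, A + X ∉ 𝒩}`. -/
def addTNull : Cardinal :=
  sInf {c | ∃ A : Set (ℕ → Bool),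
    (∃ N : Set (ℕ → Bool), IsNullCantor N ∧ ¬ IsNullCantor (Set.image2 xorAdd A N)) ∧
    Cardinal.mk A = c}

/-- Kada's cardinal invariant `𝔩`: the least `κ` such that for every `g ∈ ω^ω` there is a
family `𝒮`, of size `κ`, of slaloms `S` with `S i ⊆ {0, …, g i}` and `|S i| ≤ i`, such
that every `f ≤* g` satisfies `f ∈* S` for some `S ∈ 𝒮`. -/
def lNum : Cardinal :=
  sInf {c : Cardinal | ∀ g : ℕ → ℕ, ∃ 𝒮 : Set (ℕ → Finset ℕ),
    (∀ S ∈ 𝒮, ∀ i : ℕ, S i ⊆ Finset.range (g i + 1) ∧ (S i).card ≤ i) ∧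
    (∀ f : ℕ → ℕ, LeStar f g → ∃ S ∈ 𝒮, ∀ᶠ i in atTop, f i ∈ S i) ∧
    Cardinal.mk 𝒮 = c}

/-- Membership in `C ⊆ 2^ω` only depends on the first `n` coordinates. -/
def DeterminedBy (C : Set (ℕ → Bool)) (n : ℕ) : Prop :=
  ∀ x y : ℕ → Bool, (∀ i < n, x i = y i) → (x ∈ C ↔ y ∈ C)

/-- Extension of a finite binary string by `false`s. -/
def extendFalse {n : ℕ} (s : Fin n → Bool) : ℕ → Bool :=
  fun i => if h : i < n then s ⟨i, h⟩ else false

/-- `C ⊆ 2^ω` has uniform product measure `1/2`: for some `n`, membership in `C` depends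
only on the first `n` coordinates and exactly half of the `2^n` cylinders of level `n`
are included in `C`. -/
def HalfMeasure (C : Set (ℕ → Bool)) : Prop :=
  ∃ n : ℕ, DeterminedBy C n ∧
    2 * Nat.card {s : Fin n → Bool // extendFalse s ∈ C} = 2 ^ n

/-- Clopenness in the Cantor space `2^ω` (`Bool` discrete, product topology). -/
def IsClopenCantor (C : Set (ℕ → Bool)) : Prop :=
  letI : TopologicalSpace Bool := ⊥
  IsClopen C

/-- Closedness in the Cantor space `2^ω`. -/
def IsClosedCantor (C : Set (ℕ → Bool)) : Prop :=
  letI : TopologicalSpace Bool := ⊥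
  IsClosed C

/-- `Ω`: the (countable) set of clopen subsets of `2^ω` of measure `1/2`. -/
abbrev SoleckiBase : Type := {C : Set (ℕ → Bool) // IsClopenCantor C ∧ HalfMeasure C}

/-- The Solecki ideal `𝒮` on `Ω`: the ideal generated by the sets
`I_y = {C ∈ Ω : y ∈ C}` for `y ∈ 2^ω`. -/
def SoleckiIdeal : Set (Set SoleckiBase) :=
  {A | ∃ F : Finset (ℕ → Bool), A ⊆ ⋃ y ∈ F, {C : SoleckiBase | y ∈ C.val}}

/-- `cov_ω(𝒩)`: the least cardinality of a family of Lebesgue-null sets of reals such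
that every countable set of reals is contained in one of them. -/
def covOmegaNull : Cardinal :=
  sInf {c | ∃ 𝒜 : Set (Set ℝ), (∀ N ∈ 𝒜, MeasureTheory.volume N = 0) ∧
    (∀ B : Set ℝ, B.Countable → ∃ N ∈ 𝒜, B ⊆ N) ∧ Cardinal.mk 𝒜 = c}

/-- `non(𝒩)`: the least cardinality of a non-null set of reals. -/
def nonNullReal : Cardinal :=
  sInf {c | ∃ S : Set ℝ, MeasureTheory.volume S ≠ 0 ∧ Cardinal.mk S = c}

/-- The eventually different ideal `ℰ𝒟` on `ω × ω`. -/
def EDIdeal : Set (Set (ℕ × ℕ)) :=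
  {A | ∃ k : ℕ, ∀ᶠ n in atTop,
    {m : ℕ | (n, m) ∈ A}.Finite ∧ {m : ℕ | (n, m) ∈ A}.ncard ≤ k}

/-- Characteristic function identifying `P(ω)` with `2^ω`. -/
def chiSet (A : Set ℕ) : ℕ → Bool :=
  fun n => @decide (n ∈ A) (Classical.propDecidable _)

/-- `I ⊆ P(ω)` is `F_σ`: under the identification `P(ω) ≅ 2^ω`, `I` is a countable
union of closed subsets of the Cantor space. -/
def IsFSigmaIdeal (I : Set (Set ℕ)) : Prop :=
  ∃ C : ℕ → Set (ℕ → Bool), (∀ n, IsClosedCantor (C n)) ∧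
    ∀ A : Set ℕ, A ∈ I ↔ chiSet A ∈ ⋃ n, C n

/-- The underlying countable set of `Fin^{⊗(n+1)}`: `FinPowType 0 = ω`,
`FinPowType (n+1) = ω × FinPowType n`. -/
def FinPowType : ℕ → Type
  | 0 => ℕ
  | n + 1 => ℕ × FinPowType n

/-- The iterated Fubini power of `Fin`: `FinPowIdeal 0 = Fin`, and
`FinPowIdeal (n+1) = Fin ⊗ FinPowIdeal n`; thus `Fin^{⊗k} = FinPowIdeal (k-1)`. -/
def FinPowIdeal : (n : ℕ) → Set (Set (FinPowType n))
  | 0 => finIdeal ℕ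
  | n + 1 => Fubini (finIdeal ℕ) (FinPowIdeal n)

/-- `π` `k`-constantly bounding-predicts `f`: for all but finitely many `i` there is
`j ∈ [i, i + k)` with `f j ≤ π (f ↾ j)`. -/
def ConstBddPred (k : ℕ) (π : List ℕ → ℕ) (f : ℕ → ℕ) : Prop :=
  ∀ᶠ i in atTop, ∃ j : ℕ, i ≤ j ∧ j < i + k ∧ f j ≤ π (seg f j)

/-- The constant bounding evasion number `𝔢^const_≤(k)`. -/
def eConstLe (k : ℕ) : Cardinal :=
  sInf {c | ∃ F : Set (ℕ → ℕ),
    (∀ π : List ℕ → ℕ, ∃ f ∈ F, ¬ ConstBddPred k π f) ∧ Cardinal.mk F = c}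

/-- The constant bounding prediction number `𝔳^const_≤(k)`. -/
def vConstLe (k : ℕ) : Cardinal :=
  sInf {c | ∃ Ps : Set (List ℕ → ℕ),
    (∀ f : ℕ → ℕ, ∃ π ∈ Ps, ConstBddPred k π f) ∧ Cardinal.mk Ps = c}

/-- The asymptotic density zero ideal `𝒵` on `ω`. -/
def densityZero : Set (Set ℕ) :=
  {A : Set ℕ | Tendsto (fun n : ℕ => ((A ∩ Iio n).ncard : ℝ) / (n : ℝ)) atTop (nhds (0 : ℝ))}

/-- The σ-ideal `ℰ` on `2^ω` generated by the closed null sets. -/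
def EIdeal : Set (Set (ℕ → Bool)) :=
  {A | ∃ C : ℕ → Set (ℕ → Bool),
    (∀ n, IsClosedCantor (C n) ∧ IsNullCantor (C n)) ∧ A ⊆ ⋃ n, C n}


/-!
Upper bound: the products `A^ω` (`A ∈ I`) and the boxes `∏ m, e '' [0, f m]` lie in `K_I`. If `𝒜`
witnesses `add*_ω(I)` and `π n` generate a set of `M_I`, some `A ∈ 𝒜` escapes every finite union
of values of the `π n`, so a sequence in `A^ω` can leave, at each stage `m`, the first `m`
predictions `π n (x ↾ m)`. The predictions can also be evaded within a bound `g` computed from the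
`π n`, and an `f` in an unbounded family exceeding `g` infinitely often lets a sequence in the box
of `f` evade them infinitely often.

Lower bound: given fewer than `min {𝔟, add*_ω(I)}` sets of `M_I` (or `K_I`), the values of their
generators are fewer than `add*_ω(I)` members of `I`, hence all almost included in members of one
countable family, and then included in members of one increasing sequence `D` in `I`. The indices
of `D` needed form fewer than `𝔟` functions, bounded by one `g`, and `t ↦ D (g t)` is a single
generator covering the union.
-/

namespace IsIdealOn

variable {X : Type} {I : Set (Set X)}

lemma accumulate_mem (hI : IsIdealOn I) {B : ℕ → Set X} (hB : ∀ n, B n ∈ I) (n : ℕ) :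
    accumulate B n ∈ I := by
  induction n with
  | zero => simpa using hB 0
  | succ n ih => rw [accumulate_succ]; exact hI.union_mem ih (hB _)

lemma exists_notMem (hI : IsIdealOn I) {A : Set X} (hA : A ∈ I) : ∃ a, a ∉ A := by
  by_contra! h
  exact hI.proper (eq_univ_of_forall h ▸ hA)

lemma infinite (hI : IsIdealOn I) : Infinite X :=
  infinite_univ_iff.mp fun h => hI.proper (hI.finite_mem h)

lemma exists_monotone_absorbing (hI : IsIdealOn I) (e : ℕ ≃ X) {B : ℕ → Set X}
    (hB : ∀ n, B n ∈ I) :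
    ∃ D : ℕ → Set X, Monotone D ∧ (∀ n, D n ∈ I) ∧
      ∀ (C : Set X) (n : ℕ), AlSub C (B n) → ∃ q, C ⊆ D q := by
  refine ⟨fun n => accumulate B n ∪ e '' Iic n,
    monotone_accumulate.sup fun _ _ h => image_mono (Iic_subset_Iic.2 h),
    fun n => hI.union_mem (hI.accumulate_mem hB n) (hI.finite_mem ((finite_Iic n).image e)),
    fun C n hC => ?_⟩
  obtain ⟨N, hN⟩ := (hC.image e.symm).bddAbove
  refine ⟨max n N, fun a ha => ?_⟩
  by_cases haB : a ∈ B n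
  · exact Or.inl (monotone_accumulate (le_max_left n N) (subset_accumulate haB))
  · exact Or.inr ⟨e.symm a, (hN ⟨a, ⟨ha, haB⟩, rfl⟩).trans (le_max_right n N), e.apply_symm_apply a⟩

lemma aleph0_lt_of_mem_addStarOmegaFam (hI : IsIdealOn I) {c : Cardinal}
    (hc : c ∈ addStarOmegaFam I) : ℵ₀ < c := by
  obtain ⟨𝒜, h𝒜I, hwit, rfl⟩ := hc
  rw [← not_le, mk_le_aleph0_iff, countable_coe_iff]
  intro h𝒜
  -- a countable family is almost included in its own enumeration
  obtain ⟨B, hB⟩ := (h𝒜.insert ∅).exists_eq_range (insert_nonempty _ _)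
  have hBI : ∀ n, B n ∈ I := by
    intro n
    rcases (hB ▸ mem_range_self n : B n ∈ insert ∅ 𝒜) with h | h
    · exact h ▸ hI.finite_mem finite_empty
    · exact h𝒜I h
  obtain ⟨A, hA, hAB⟩ := hwit B hBI
  obtain ⟨n, rfl⟩ : A ∈ range B := hB ▸ mem_insert_of_mem _ hA
  exact hAB n (by simp [AlSub])

end IsIdealOn

lemma exists_unbounded_mk_eq_bNum :
    ∃ F : Set (ℕ → ℕ), (∀ g, ∃ f ∈ F, ¬ LeStar f g) ∧ #F = bNum :=
  csInf_mem (s := {c | ∃ F : Set (ℕ → ℕ), (∀ g, ∃ f ∈ F, ¬ LeStar f g) ∧ #F = c})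
    ⟨_, univ, fun g => ⟨g + 1, mem_univ _, fun h => by simpa using h.exists⟩, rfl⟩

lemma exists_leStar_of_mk_lt_bNum {ι : Type} (f : ι → ℕ → ℕ) (h : #ι < bNum) :
    ∃ g, ∀ i, LeStar (f i) g := by
  by_contra! hf
  have hunb : ∀ g, ∃ f' ∈ range f, ¬ LeStar f' g := fun g =>
    (hf g).elim fun i hi => ⟨f i, mem_range_self i, hi⟩
  have hb : bNum ≤ #(range f) := csInf_le' ⟨range f, hunb, rfl⟩
  exact (hb.trans mk_range_le).not_gt h

lemma exists_leStar_of_nat (f : ℕ → ℕ → ℕ) : ∃ g, ∀ k, LeStar (f k) g :=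
  ⟨fun n => (Finset.range (n + 1)).sup fun k => f k n, fun k => eventually_atTop.2
    ⟨k, fun n hn => Finset.le_sup (f := fun k => f k n) (Finset.mem_range.2 (by omega))⟩⟩

lemma aleph0_lt_bNum : ℵ₀ < bNum := by
  obtain ⟨F, hF, hFb⟩ := exists_unbounded_mk_eq_bNum
  rw [← hFb, ← not_le, mk_le_aleph0_iff, countable_coe_iff]
  intro hFc
  obtain ⟨f, hf, -⟩ := hF 0
  obtain ⟨u, rfl⟩ := hFc.exists_eq_range ⟨f, hf⟩
  obtain ⟨g, hg⟩ := exists_leStar_of_nat u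
  obtain ⟨_, ⟨k, rfl⟩, hk⟩ := hF g
  exact hk (hg k)

lemma mk_prod_le_max_aleph0 {α β : Type} [Countable β] : #(α × β) ≤ max #α ℵ₀ := by
  rw [mk_prod, lift_id, lift_id]
  calc #α * #β ≤ #α * ℵ₀ := by gcongr; exact mk_le_aleph0
    _ ≤ max (max #α ℵ₀) ℵ₀ := mul_le_max _ _
    _ = max #α ℵ₀ := by rw [max_assoc, max_self]

lemma addIdeal_eq_of {Y : Type} {J : Set (Set Y)} {κ : Cardinal}
    (hbad : ∃ 𝒜 ⊆ J, ⋃₀ 𝒜 ∉ J ∧ #𝒜 ≤ κ) (hgood : ∀ 𝒜 ⊆ J, #𝒜 < κ → ⋃₀ 𝒜 ∈ J) :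
    addIdeal J = κ := by
  obtain ⟨𝒜, h𝒜J, h𝒜, h𝒜κ⟩ := hbad
  have hle : addIdeal J ≤ #𝒜 := csInf_le' ⟨𝒜, h𝒜J, h𝒜, rfl⟩
  refine le_antisymm (hle.trans h𝒜κ) (le_csInf ⟨_, 𝒜, h𝒜J, h𝒜, rfl⟩ ?_)
  rintro _ ⟨ℬ, hℬJ, hℬ, rfl⟩
  exact not_lt.1 fun h => hℬ (hgood ℬ hℬJ h)

section Sequences

variable {α : Type}

@[simp]
lemma seg_length (x : ℕ → α) (n : ℕ) : (seg x n).length = n := by simp [seg]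

lemma seg_succ (x : ℕ → α) (n : ℕ) : seg x (n + 1) = seg x n ++ [x n] := by
  simp [seg, List.range_succ]

lemma seg_injective (x : ℕ → α) : (seg x).Injective :=
  fun m n h => by simpa using congrArg List.length h

def prefixRec (F : List α → α) : ℕ → List α
  | 0 => []
  | n + 1 => prefixRec F n ++ [F (prefixRec F n)]

lemma exists_seq_mem_seg {S : List α → Set α} (hS : ∀ s, (S s).Nonempty) :
    ∃ x : ℕ → α, ∀ n, x n ∈ S (seg x n) := by
  choose F hF using hS
  have hseg : ∀ n, seg (fun n => F (prefixRec F n)) n = prefixRec F n := by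
    intro n
    induction n with
    | zero => simp [seg, prefixRec]
    | succ n ih => rw [seg_succ, ih, prefixRec]
  exact ⟨fun n => F (prefixRec F n), fun n => hseg n ▸ hF _⟩

lemma finite_setOf_length_le_forall_mem {S : Set α} (hS : S.Finite) (b : ℕ) :
    {s : List α | s.length ≤ b ∧ ∀ a ∈ s, a ∈ S}.Finite := by
  have := hS.to_subtype
  refine ((List.finite_length_le S b).image (List.map Subtype.val)).subset ?_
  rintro s ⟨hs, hsS⟩
  lift s to List S using hsS
  exact ⟨s, by simpa using hs, rfl⟩

end Sequences

/-- `MIdeal I = captureIdeal I seg` and `KIdeal I = captureIdeal I fun _ m => m`. -/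
def captureIdeal {X T : Type} (I : Set (Set X)) (idx : (ℕ → X) → ℕ → T) :
    Set (Set (ℕ → X)) :=
  {A | ∃ φ : ℕ → T → Set X, (∀ n t, φ n t ∈ I) ∧
    A ⊆ ⋃ n, {x : ℕ → X | ∀ᶠ m in atTop, x m ∈ φ n (idx x m)}}

section LowerBound

variable {X : Type} {I : Set (Set X)}

lemma IsIdealOn.exists_capture_of_forall_alSub (hI : IsIdealOn I) (e : ℕ ≃ X)
    {T ι : Type} [Countable T] (hι : #ι < bNum) {φ : ι → T → Set X} {B : ℕ → Set X}
    (hB : ∀ n, B n ∈ I) (hφB : ∀ i t, ∃ n, AlSub (φ i t) (B n)) :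
    ∃ Ψ : T → Set X, (∀ t, Ψ t ∈ I) ∧ ∀ i (x : ℕ → X) (τ : ℕ → T), τ.Injective →
      (∀ᶠ m in atTop, x m ∈ φ i (τ m)) → ∀ᶠ m in atTop, x m ∈ Ψ (τ m) := by
  obtain ⟨D, hDmono, hDI, hD⟩ := hI.exists_monotone_absorbing e hB
  choose q hq using fun i t => (hφB i t).elim fun n hn => hD (φ i t) n hn
  obtain ⟨cd, hcd⟩ := Countable.exists_injective_nat T
  obtain ⟨g, hg⟩ := exists_leStar_of_mk_lt_bNum (fun i => Function.extend cd (q i) 0) hι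
  refine ⟨fun t => D (g (cd t)), fun t => hDI _, fun i x τ hτ hx => ?_⟩
  have hlarge := (hcd.comp hτ).nat_tendsto_atTop.eventually (hg i)
  filter_upwards [hx, hlarge] with m hxm hm
  refine hDmono ?_ (hq i (τ m) hxm)
  simpa [hcd.extend_apply] using hm

lemma IsIdealOn.sUnion_mem_captureIdeal (hI : IsIdealOn I) (e : ℕ ≃ X) {T : Type} [Countable T]
    {idx : (ℕ → X) → ℕ → T} (hidx : ∀ x, (idx x).Injective) {𝒜 : Set (Set (ℕ → X))}
    (h𝒜 : 𝒜 ⊆ captureIdeal I idx) (h𝒜μ : #𝒜 < sInf (insert bNum (addStarOmegaFam I))) :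
    ⋃₀ 𝒜 ∈ captureIdeal I idx := by
  have hb : #𝒜 < bNum := h𝒜μ.trans_le (csInf_le' (mem_insert _ _))
  have hsmall : max #𝒜 ℵ₀ < bNum := max_lt hb aleph0_lt_bNum
  choose φ hφI hφ using fun A : 𝒜 => h𝒜 A.2
  let Φ : 𝒜 × ℕ × T → Set X := fun p => φ p.1 p.2.1 p.2.2
  have h𝒞 : ¬ ∀ B : ℕ → Set X, (∀ n, B n ∈ I) → ∃ C ∈ range Φ, ∀ n, ¬ AlSub C (B n) := by
    intro hwit
    have hmem : #(range Φ) ∈ addStarOmegaFam I :=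
      ⟨range Φ, by rintro _ ⟨p, rfl⟩; exact hφI _ _ _, hwit, rfl⟩
    have hΦ : #(range Φ) ≤ max #𝒜 ℵ₀ := mk_range_le.trans mk_prod_le_max_aleph0
    refine hΦ.not_gt (max_lt ?_ ?_)
    · exact h𝒜μ.trans_le (csInf_le' (mem_insert_of_mem _ hmem))
    · exact hI.aleph0_lt_of_mem_addStarOmegaFam hmem
  push Not at h𝒞
  obtain ⟨B, hB, hBC⟩ := h𝒞
  obtain ⟨Ψ, hΨI, hΨ⟩ := hI.exists_capture_of_forall_alSub e
    (mk_prod_le_max_aleph0.trans_lt hsmall) hB fun (i : 𝒜 × ℕ) t => hBC _ ⟨(i.1, i.2, t), rfl⟩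
  refine ⟨fun _ => Ψ, fun _ => hΨI, ?_⟩
  rintro x ⟨A, hA, hxA⟩
  obtain ⟨n, hn⟩ := mem_iUnion.1 (hφ ⟨A, hA⟩ hxA)
  exact mem_iUnion.2 ⟨0, hΨ (⟨A, hA⟩, n) x (idx x) (hidx x) hn⟩

end LowerBound

section UpperBound

variable {X : Type} {I : Set (Set X)}

lemma KIdeal_subset_MIdeal : KIdeal I ⊆ MIdeal I := by
  rintro A ⟨φ, hφ, hA⟩
  refine ⟨fun n s => φ n s.length, fun n s => hφ n s.length, hA.trans fun _ hx => ?_⟩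
  simpa using hx

lemma univ_pi_mem_KIdeal {S : ℕ → Set X} (hS : ∀ m, S m ∈ I) : univ.pi S ∈ KIdeal I :=
  ⟨fun _ => S, fun _ => hS, fun _ hx => mem_iUnion.2 ⟨0, .of_forall fun m => hx m (mem_univ m)⟩⟩

lemma notMem_iUnion_of_frequently_notMem_accumulate {π : ℕ → List X → Set X} {x : ℕ → X}
    (hx : ∃ᶠ m in atTop, x m ∉ accumulate (fun n => π n (seg x m)) m) :
    x ∉ ⋃ n, {x : ℕ → X | ∀ᶠ m in atTop, x m ∈ π n (seg x m)} := by
  simp only [mem_iUnion, mem_ofPred_eq, not_exists]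
  intro n hn
  obtain ⟨m, ⟨hm, hnm⟩, hxm⟩ := ((hn.and (eventually_ge_atTop n)).and_frequently hx).exists
  exact hxm (mem_accumulate.2 ⟨n, hnm, hm⟩)

lemma IsIdealOn.sUnion_pi_const_notMem_MIdeal [Countable X] (hI : IsIdealOn I)
    {𝒜 : Set (Set X)} (hwit : ∀ B : ℕ → Set X, (∀ n, B n ∈ I) → ∃ A ∈ 𝒜, ∀ n, ¬ AlSub A (B n)) :
    ⋃₀ ((fun A => univ.pi fun _ : ℕ => A) '' 𝒜) ∉ MIdeal I := by
  rintro ⟨π, hπ, hsub⟩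
  obtain ⟨v, hv⟩ := exists_surjective_nat (ℕ × List X)
  obtain ⟨A, hA, hAB⟩ := hwit (fun k => accumulate (fun n => π n (v k).2) (v k).1)
    fun k => hI.accumulate_mem (fun n => hπ n _) _
  have hne : ∀ s : List X, (A \ accumulate (fun n => π n s) s.length).Nonempty := by
    intro s
    obtain ⟨k, hk⟩ := hv (s.length, s)
    simpa [hk] using Set.Infinite.nonempty (hAB k)
  obtain ⟨x, hx⟩ := exists_seq_mem_seg hne
  refine notMem_iUnion_of_frequently_notMem_accumulate (.of_forall fun m => ?_)
    (hsub ⟨_, mem_image_of_mem _ hA, fun m _ => (hx m).1⟩)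
  simpa using (hx m).2

lemma IsIdealOn.exists_avoiding_bound (hI : IsIdealOn I) (e : ℕ ≃ X) {V : List X → Set X}
    (hV : ∀ s, V s ∈ I) :
    ∃ G : ℕ → ℕ, ∀ b (s : List X), s.length ≤ b → (∀ a ∈ s, e.symm a ≤ b) →
      ∃ k ≤ G b, e k ∉ V s := by
  choose y hy using fun s => hI.exists_notMem (hV s)
  have hfin : ∀ b, {s : List X | s.length ≤ b ∧ ∀ a ∈ s, a ∈ e '' Iic b}.Finite :=
    fun b => finite_setOf_length_le_forall_mem ((finite_Iic b).image e) b
  choose G hG using fun b => ((hfin b).image fun s => e.symm (y s)).bddAbove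
  refine ⟨G, fun b s hs hsb => ⟨e.symm (y s), hG b ⟨s, ⟨hs, fun a ha => ?_⟩, rfl⟩, ?_⟩⟩
  · simpa [e.image_eq_preimage_symm] using hsb a ha
  · simpa using hy s

lemma exists_strictMono_le_succ (G : ℕ → ℕ) :
    ∃ g : ℕ → ℕ, StrictMono g ∧ ∀ m, G (g m) ≤ g (m + 1) :=
  ⟨fun m => Nat.rec 0 (fun _ b => max (b + 1) (G b)) m,
    strictMono_nat_of_lt_succ fun _ => Nat.lt_of_lt_of_le (Nat.lt_succ_self _) (le_max_left _ _),
    fun _ => le_max_right _ _⟩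

lemma IsIdealOn.exists_bound_evading (hI : IsIdealOn I) (e : ℕ ≃ X) {V : List X → Set X}
    (hV : ∀ s, V s ∈ I) :
    ∃ g : ℕ → ℕ, ∀ f : ℕ → ℕ, ∃ x : ℕ → X, (∀ m, e.symm (x m) ≤ f m) ∧
      ∀ m, g m ≤ f m → x m ∉ V (seg x m) := by
  obtain ⟨G, hG⟩ := hI.exists_avoiding_bound e hV
  obtain ⟨g, hg, hGg⟩ := exists_strictMono_le_succ G
  refine ⟨fun m => g (m + 1), fun f => ?_⟩
  let P : List X → Prop := fun s =>
    g (s.length + 1) ≤ f s.length ∧ ∀ a ∈ s, e.symm a ≤ g s.length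
  have hS : ∀ s,
      (if P s then {a | e.symm a ≤ g (s.length + 1) ∧ a ∉ V s} else {e 0}).Nonempty := by
    intro s
    split_ifs with hs
    · obtain ⟨k, hk, hkV⟩ := hG _ s (hg.id_le _) hs.2
      exact ⟨e k, by simpa using hk.trans (hGg _), hkV⟩
    · exact singleton_nonempty _
  obtain ⟨x, hx⟩ := exists_seq_mem_seg hS
  have hxP : ∀ m, P (seg x m) → e.symm (x m) ≤ g (m + 1) ∧ x m ∉ V (seg x m) :=
    fun m hP => by simpa [if_pos hP] using hx m
  have hxnP : ∀ m, ¬ P (seg x m) → x m = e 0 := fun m hP => by simpa [if_neg hP] using hx m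
  have hPseg : ∀ m, g (m + 1) ≤ f m → P (seg x m) := by
    refine fun m hm => ⟨by simpa using hm, ?_⟩
    rw [seg_length]
    intro _ ha
    obtain ⟨i, hi, rfl⟩ := List.mem_map.1 ha
    by_cases hP : P (seg x i)
    · exact (hxP i hP).1.trans (hg.monotone (List.mem_range.1 hi))
    · simp [hxnP i hP]
  refine ⟨x, fun m => ?_, fun m hm => (hxP m (hPseg m hm)).2⟩
  by_cases hP : P (seg x m)
  · exact (hxP m hP).1.trans (by simpa using hP.1)
  · simp [hxnP m hP]

lemma IsIdealOn.sUnion_pi_Iic_notMem_MIdeal (hI : IsIdealOn I) (e : ℕ ≃ X) {F : Set (ℕ → ℕ)}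
    (hF : ∀ g, ∃ f ∈ F, ¬ LeStar f g) :
    ⋃₀ ((fun f => univ.pi fun m => e '' Iic (f m)) '' F) ∉ MIdeal I := by
  rintro ⟨π, hπ, hsub⟩
  obtain ⟨g, hg⟩ := hI.exists_bound_evading e (V := fun s => accumulate (fun n => π n s) s.length)
    fun s => hI.accumulate_mem (fun n => hπ n s) _
  obtain ⟨f, hfF, hfg⟩ := hF g
  obtain ⟨x, hxf, hxV⟩ := hg f
  refine notMem_iUnion_of_frequently_notMem_accumulate ?_
    (hsub ⟨_, mem_image_of_mem _ hfF, fun m _ => ⟨e.symm (x m), hxf m, e.apply_symm_apply _⟩⟩)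
  refine (not_eventually.1 hfg).mono fun m hm => ?_
  simpa using hxV m (not_le.1 hm).le

lemma IsIdealOn.exists_subset_KIdeal_sUnion_notMem_MIdeal [Countable X] (hI : IsIdealOn I)
    (e : ℕ ≃ X) :
    ∃ 𝒜 ⊆ KIdeal I, ⋃₀ 𝒜 ∉ MIdeal I ∧ #𝒜 ≤ sInf (insert bNum (addStarOmegaFam I)) := by
  rcases (csInf_mem (insert_nonempty bNum (addStarOmegaFam I)) : _ ∈ insert _ _) with
    hμ | ⟨𝒜, h𝒜I, hwit, hμ⟩
  · obtain ⟨F, hF, hFb⟩ := exists_unbounded_mk_eq_bNum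
    refine ⟨_, image_subset_iff.2 fun f _ => univ_pi_mem_KIdeal fun m =>
      hI.finite_mem ((finite_Iic (f m)).image e), hI.sUnion_pi_Iic_notMem_MIdeal e hF, ?_⟩
    exact mk_image_le.trans (hFb.trans hμ.symm).le
  · refine ⟨_, image_subset_iff.2 fun A hA => univ_pi_mem_KIdeal fun _ => h𝒜I hA,
      hI.sUnion_pi_const_notMem_MIdeal hwit, mk_image_le.trans hμ.le⟩

end UpperBound

/-- For every ideal `I` on a countable set `X`,
`add(M_I) = add(K_I) = min {𝔟, add*_ω(I)}`.  The right-hand side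
(`min` with the convention `add*_ω(I) = ∞` when no witnessing family exists)
is rendered as `sInf (insert bNum (addStarOmegaFam I))`. -/
theorem stmt0 (X : Type) [Countable X] (I : Set (Set X)) (hI : IsIdealOn I) :
    addIdeal (MIdeal I) = addIdeal (KIdeal I) ∧
    addIdeal (MIdeal I) = sInf (insert bNum (addStarOmegaFam I)) := by
  have := hI.infinite
  obtain ⟨e⟩ : Nonempty (ℕ ≃ X) := nonempty_equiv_of_countable
  obtain ⟨𝒜, h𝒜K, h𝒜M, h𝒜μ⟩ := hI.exists_subset_KIdeal_sUnion_notMem_MIdeal e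
  have hM : addIdeal (MIdeal I) = sInf (insert bNum (addStarOmegaFam I)) :=
    addIdeal_eq_of ⟨𝒜, h𝒜K.trans KIdeal_subset_MIdeal, h𝒜M, h𝒜μ⟩
      fun _ hℬ hℬμ => hI.sUnion_mem_captureIdeal e seg_injective hℬ hℬμ
  have hK : addIdeal (KIdeal I) = sInf (insert bNum (addStarOmegaFam I)) :=
    addIdeal_eq_of ⟨𝒜, h𝒜K, fun h => h𝒜M (KIdeal_subset_MIdeal h), h𝒜μ⟩
      fun _ hℬ hℬμ => hI.sUnion_mem_captureIdeal e (fun _ => Function.injective_id) hℬ hℬμ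
  exact ⟨hM.trans hK.symm, hM⟩

end
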